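/- There exists a constant C > 0 such that for all N ≥ 2, setting K = ⌈2N · log N⌉ (natural logarithm), the random-to-top shuffle satisfies, for every starting deck d (a permutation of Fin N): TV(μ_K(d), U) ≤ C/N, where U is the uniform distribution on the permutations of Fin N. -/

import Mathlib

open scoped ENNReal

/-- Total variation distance between two distributions: `(1/2) Σ_x |μ(x) − ν(x)|`. -/
noncomputable def tvDist {X : Type*} (μ ν : PMF X) : ℝ≥0∞ :=
  (1 / 2) * ∑' x, max (μ x - ν x) (ν x - μ x)

/-- The permutation of positions that cyclically shifts the block `0..j` one place to the right:
it sends `0 ↦ j`, `i ↦ i − 1` for `1 ≤ i ≤ j`, and fixes the positions above `j`. Composing a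
deck with this permutation moves the card at position `j` to the top and shifts the cards at
positions `0..j−1` down one place. -/
def moveToTop {N : ℕ} (j : Fin N) : Equiv.Perm (Fin N) :=
  (List.range (j : ℕ)).foldl
    (fun acc k =>
      Equiv.swap (⟨k % N, Nat.mod_lt k j.pos⟩ : Fin N)
          (⟨(k + 1) % N, Nat.mod_lt (k + 1) j.pos⟩ : Fin N) * acc)
    1

/-- One step of the random-to-top shuffle: sample a position `j` uniformly and move the card at
position `j` to the top of the deck. -/
noncomputable def rtopStep {N : ℕ} (h : 0 < N) (d : Equiv.Perm (Fin N)) :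
    PMF (Equiv.Perm (Fin N)) :=
  haveI : Nonempty (Fin N) := ⟨⟨0, h⟩⟩
  (PMF.uniformOfFintype (Fin N)).bind fun j => PMF.pure (d * moveToTop j)

/-- Distribution of the deck after `K` steps of the random-to-top shuffle starting from `d`. -/
noncomputable def rtopWalk {N : ℕ} (h : 0 < N) (d : Equiv.Perm (Fin N)) :
    ℕ → PMF (Equiv.Perm (Fin N))
  | 0 => PMF.pure d
  | (K + 1) => (rtopWalk h d K).bind (rtopStep h)

/-- The uniform distribution on permutations of `Fin N`. -/
noncomputable def uniformPerm (N : ℕ) : PMF (Equiv.Perm (Fin N)) :=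
  haveI : Nonempty (Equiv.Perm (Fin N)) := ⟨1⟩
  PMF.uniformOfFintype (Equiv.Perm (Fin N))

/-!
Couple two copies of the walk, started from decks `d` and `e`, by moving the same *card* to the
top in both at every step; since a deck is a bijection, a uniform position is the same as a
uniform card, so each copy is still the random-to-top shuffle. The cards chosen so far then occupy
the same top positions in both decks, so the two decks coincide as soon as every card has been
chosen. By the union bound this fails after `K` steps with probability at most
`N (1 - 1/N)^K ≤ N e^{-K/N} ≤ 1/N` for `K ≥ 2 N log N`. The uniform distribution is stationary,
so it is the mixture of the walks started from uniform decks, and convexity of total variation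
bounds the distance to it by the coupling bound.
-/

open scoped ENNReal
open Equiv Finset

section TotalVariation

variable {α β : Type*}

theorem tvDist_self (μ : PMF α) : tvDist μ μ = 0 := by
  simp [tvDist]

theorem tvDist_le_one (μ ν : PMF α) : tvDist μ ν ≤ 1 := by
  calc tvDist μ ν ≤ 2⁻¹ * ∑' x, (μ x + ν x) := by
        rw [tvDist, one_div]
        gcongr with x
        exact max_le (tsub_le_self.trans le_self_add) (tsub_le_self.trans le_add_self)
    _ = 1 := by
        rw [ENNReal.tsum_add, μ.tsum_coe, ν.tsum_coe, one_add_one_eq_two,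
          ENNReal.inv_mul_cancel two_ne_zero ENNReal.ofNat_ne_top]

theorem ENNReal.tsum_sub_tsum_le (u v : α → ℝ≥0∞) :
    ∑' a, u a - ∑' a, v a ≤ ∑' a, (u a - v a) := by
  rw [tsub_le_iff_right, ← ENNReal.tsum_add]
  exact ENNReal.tsum_le_tsum fun a => le_tsub_add

theorem PMF.bind_apply_sub_le (p : PMF α) (f g : α → PMF β) (b : β) :
    p.bind f b - p.bind g b ≤ ∑' a, p a * (f a b - g a b) := by
  simp only [PMF.bind_apply, ENNReal.mul_sub fun _ _ => p.apply_ne_top _]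
  exact ENNReal.tsum_sub_tsum_le _ _

theorem tvDist_bind_le (p : PMF α) (f g : α → PMF β) :
    tvDist (p.bind f) (p.bind g) ≤ ∑' a, p a * tvDist (f a) (g a) := by
  calc tvDist (p.bind f) (p.bind g)
      ≤ 2⁻¹ * ∑' b, ∑' a, p a * max (f a b - g a b) (g a b - f a b) := by
        rw [tvDist, one_div]
        gcongr with b
        exact max_le
          ((p.bind_apply_sub_le f g b).trans (by gcongr; exact le_max_left _ _))
          ((p.bind_apply_sub_le g f b).trans (by gcongr; exact le_max_right _ _))
    _ = ∑' a, p a * tvDist (f a) (g a) := by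
        simp only [tvDist, one_div, ENNReal.tsum_comm (α := β), ← ENNReal.tsum_mul_left]
        congr 1; ext a; congr 1; ext b; ring

theorem tvDist_map_le (p : PMF α) (f g : α → β) :
    tvDist (p.map f) (p.map g) ≤ p.toOuterMeasure {a | f a ≠ g a} := by
  rw [← PMF.bind_pure_comp, ← PMF.bind_pure_comp, PMF.toOuterMeasure_apply]
  refine (tvDist_bind_le p _ _).trans (ENNReal.tsum_le_tsum fun a => ?_)
  by_cases h : f a = g a
  · simp [h, tvDist_self]
  · rw [Set.indicator_of_mem h]
    exact mul_le_of_le_one_right' (tvDist_le_one _ _)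

theorem tvDist_bind_le_of_forall (μ : PMF β) (p : PMF α) (f : α → PMF β) {ε : ℝ≥0∞}
    (h : ∀ a, tvDist μ (f a) ≤ ε) : tvDist μ (p.bind f) ≤ ε := by
  conv_lhs => rw [← PMF.bind_const p μ]
  calc tvDist (p.bind fun _ => μ) (p.bind f) ≤ ∑' a, p a * tvDist μ (f a) :=
        tvDist_bind_le _ _ _
    _ ≤ ∑' a, p a * ε := by gcongr with a; exact h a
    _ = ε := by rw [ENNReal.tsum_mul_right, p.tsum_coe, one_mul]

end TotalVariation

theorem PMF.map_uniformOfFintype_equiv {α β : Type*} [Fintype α] [Nonempty α] [Fintype β]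
    [Nonempty β] (e : α ≃ β) : (PMF.uniformOfFintype α).map e = PMF.uniformOfFintype β := by
  ext b
  rw [PMF.map_apply, tsum_eq_single (e.symm b) fun a ha => if_neg fun h => ha (by simp [h])]
  simp [Fintype.card_congr e]

section RandomWord

variable (α : Type*) [Fintype α] [Nonempty α]

noncomputable def randomWord : ℕ → PMF (List α)
  | 0 => PMF.pure []
  | K + 1 => (randomWord K).bind fun l => (PMF.uniformOfFintype α).map (· :: l)

variable {α}

theorem randomWord_toOuterMeasure_notMem (a : α) (K : ℕ) :
    (randomWord α K).toOuterMeasure {l | a ∉ l} =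
      (((Fintype.card α - 1 : ℕ) : ℝ≥0∞) / Fintype.card α) ^ K := by
  classical
  set q : ℝ≥0∞ := ((Fintype.card α - 1 : ℕ) : ℝ≥0∞) / Fintype.card α
  have hstep (l : List α) :
      (PMF.uniformOfFintype α).toOuterMeasure ((· :: l) ⁻¹' {l | a ∉ l}) =
        {l | a ∉ l}.indicator (fun _ => q) l := by
    by_cases ha : a ∈ l
    · simp [ha]
    · have : (· :: l) ⁻¹' {l | a ∉ l} = {x | x ≠ a} := by ext; simp [ha, eq_comm]
      rw [this, PMF.toOuterMeasure_uniformOfFintype_apply, Set.card_ne_eq]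
      simp [ha, q]
  induction K with
  | zero => simp [randomWord]
  | succ K ih =>
    rw [randomWord, PMF.toOuterMeasure_bind_apply, pow_succ, ← ih, PMF.toOuterMeasure_apply,
      ← ENNReal.tsum_mul_right]
    refine tsum_congr fun l => ?_
    rw [PMF.toOuterMeasure_map_apply, hstep]
    by_cases ha : a ∈ l <;> simp [ha]

theorem randomWord_toOuterMeasure_exists_notMem_le (K : ℕ) :
    (randomWord α K).toOuterMeasure {l | ∃ a, a ∉ l} ≤
      Fintype.card α * (((Fintype.card α - 1 : ℕ) : ℝ≥0∞) / Fintype.card α) ^ K := by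
  calc (randomWord α K).toOuterMeasure {l | ∃ a, a ∉ l}
      = (randomWord α K).toOuterMeasure (⋃ a, {l | a ∉ l}) := by rw [Set.ofPred_exists]
    _ ≤ ∑ a, (randomWord α K).toOuterMeasure {l | a ∉ l} :=
        MeasureTheory.measure_iUnion_fintype_le _ _
    _ = _ := by simp [randomWord_toOuterMeasure_notMem]

end RandomWord

theorem Real.mul_one_sub_inv_pow_le_inv {x : ℝ} (hx : 1 ≤ x) {K : ℕ}
    (hK : 2 * x * Real.log x ≤ K) : x * (1 - x⁻¹) ^ K ≤ x⁻¹ := by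
  have hx0 : 0 < x := by linarith
  calc x * (1 - x⁻¹) ^ K ≤ x * Real.exp (-x⁻¹) ^ K := by
        gcongr
        · exact sub_nonneg.2 (inv_le_one_of_one_le₀ hx)
        · exact Real.one_sub_le_exp_neg _
    _ = x * Real.exp (-(K / x)) := by rw [← Real.exp_nat_mul]; ring_nf
    _ ≤ x * Real.exp (-(2 * Real.log x)) := by
        gcongr
        rw [le_div_iff₀ hx0]; linarith
    _ = x⁻¹ := by
        rw [Real.exp_neg, two_mul, Real.exp_add, Real.exp_log hx0]
        field_simp

theorem natCast_mul_pow_le_ofReal_inv {N K : ℕ} (hN : 0 < N)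
    (hK : 2 * (N : ℝ) * Real.log N ≤ K) :
    (N : ℝ≥0∞) * (((N - 1 : ℕ) : ℝ≥0∞) / N) ^ K ≤ ENNReal.ofReal (N : ℝ)⁻¹ := by
  have hN' : (0 : ℝ) < N := Nat.cast_pos.2 hN
  have hq : ((N - 1 : ℕ) : ℝ) / N = 1 - (N : ℝ)⁻¹ := by
    rw [Nat.cast_sub hN, Nat.cast_one]; field_simp
  rw [← ENNReal.ofReal_natCast (N - 1), ← ENNReal.ofReal_natCast N,
    ← ENNReal.ofReal_div_of_pos hN', ← ENNReal.ofReal_pow (by positivity),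
    ← ENNReal.ofReal_mul (by positivity), hq]
  exact ENNReal.ofReal_le_ofReal (Real.mul_one_sub_inv_pow_le_inv (Nat.one_le_cast.2 hN) hK)

theorem Finset.card_le_of_forall_lt_card {α : Type*} {f : α → ℕ} (hf : f.Injective)
    {T : Finset α} (hT : ∀ t ∈ T, f t < #T) {c : α} (hc : c ∉ T) : #T ≤ f c := by
  classical
  have himage : T.image f = range #T :=
    eq_of_subset_of_card_le
      (fun k hk => by obtain ⟨t, ht, rfl⟩ := mem_image.1 hk; simpa using hT t ht)
      (by rw [card_range, card_image_of_injective _ hf])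
  by_contra! hlt
  obtain ⟨t, ht, htc⟩ := mem_image.1 (himage ▸ mem_range.2 hlt)
  exact hc (hf htc ▸ ht)

theorem Fin.coe_cycleRange_apply {n : ℕ} (i j : Fin n) :
    (Fin.cycleRange i j : ℕ) = if j < i then (j : ℕ) + 1 else if j = i then 0 else j := by
  rcases lt_trichotomy j i with h | rfl | h
  · rw [if_pos h, Fin.coe_cycleRange_of_lt h]
  · simp [Fin.coe_cycleRange_of_le le_rfl]
  · rw [if_neg h.not_gt, if_neg h.ne', Fin.cycleRange_of_gt h]

theorem Fin.cycleRange_mul_swap {n : ℕ} {i j : Fin n} (hij : (j : ℕ) = i + 1) :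
    Fin.cycleRange i * swap i j = Fin.cycleRange j := by
  ext x
  simp only [Perm.mul_apply, Fin.coe_cycleRange_apply, swap_apply_def]
  simp only [Fin.ext_iff, Fin.lt_def] at *
  split_ifs <;> omega

theorem moveToTop_eq_cycleRange_inv {N : ℕ} (j : Fin N) :
    moveToTop j = (Fin.cycleRange j)⁻¹ := by
  suffices ∀ n (hn : n ≤ (j : ℕ)), (List.range n).foldl
      (fun acc k => swap (⟨k % N, Nat.mod_lt k j.pos⟩ : Fin N)
        ⟨(k + 1) % N, Nat.mod_lt (k + 1) j.pos⟩ * acc) 1 =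
      (Fin.cycleRange ⟨n, hn.trans_lt j.isLt⟩)⁻¹ from this j le_rfl
  intro n hn
  induction n with
  | zero => simp
  | succ n ih =>
    rw [List.range_succ, List.foldl_append, List.foldl_cons, List.foldl_nil, ih (by omega),
      ← Fin.cycleRange_mul_swap (i := ⟨n, by omega⟩) (j := ⟨n + 1, by omega⟩) rfl, mul_inv_rev,
      swap_inv]
    congr 3 <;> simp only [Nat.mod_eq_of_lt (show n + 1 < N by omega),
      Nat.mod_eq_of_lt (show n < N by omega)]

namespace RandomToTop

variable {N : ℕ}

def moveCardToTop (c : Fin N) (d : Perm (Fin N)) : Perm (Fin N) :=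
  d * moveToTop (d⁻¹ c)

theorem moveCardToTop_inv_apply (c : Fin N) (d : Perm (Fin N)) (x : Fin N) :
    (moveCardToTop c d)⁻¹ x = Fin.cycleRange (d⁻¹ c) (d⁻¹ x) := by
  simp [moveCardToTop, moveToTop_eq_cycleRange_inv, mul_inv_rev]

def AgreeOn (T : Finset (Fin N)) (d e : Perm (Fin N)) : Prop :=
  ∀ c ∈ T, d⁻¹ c = e⁻¹ c ∧ (d⁻¹ c : ℕ) < #T

theorem AgreeOn.insert_moveCardToTop {T : Finset (Fin N)} {d e : Perm (Fin N)}
    (h : AgreeOn T d e) (c : Fin N) :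
    AgreeOn (insert c T) (moveCardToTop c d) (moveCardToTop c e) := by
  intro x hx
  simp only [moveCardToTop_inv_apply, ← Fin.val_inj, Fin.coe_cycleRange_apply, Fin.lt_def]
  by_cases hcT : c ∈ T
  · have hxT : x ∈ T := by rcases mem_insert.1 hx with rfl | hxT <;> assumption
    obtain ⟨hcde, hc⟩ := h c hcT
    obtain ⟨hxde, hx⟩ := h x hxT
    rw [insert_eq_of_mem hcT, hcde, hxde]
    rw [hcde] at hc
    rw [hxde] at hx
    exact ⟨rfl, by split_ifs <;> omega⟩
  · have hd := card_le_of_forall_lt_card (f := fun t => (d⁻¹ t : ℕ))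
      (Fin.val_injective.comp d⁻¹.injective) (fun t ht => (h t ht).2) hcT
    have he := card_le_of_forall_lt_card (f := fun t => (e⁻¹ t : ℕ))
      (Fin.val_injective.comp e⁻¹.injective) (fun t ht => (h t ht).1 ▸ (h t ht).2) hcT
    rw [card_insert_of_notMem hcT]
    rcases mem_insert.1 hx with rfl | hxT
    · simp
    · obtain ⟨hxde, hx⟩ := h x hxT
      rw [hxde] at hx ⊢
      constructor <;> split_ifs <;> omega

theorem agreeOn_foldr_moveCardToTop (l : List (Fin N)) (d e : Perm (Fin N)) :
    AgreeOn l.toFinset (l.foldr moveCardToTop d) (l.foldr moveCardToTop e) := by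
  induction l with
  | nil => simp [AgreeOn]
  | cons c l ih => simpa using ih.insert_moveCardToTop c

theorem foldr_moveCardToTop_eq_of_forall_mem {l : List (Fin N)} (hl : ∀ c, c ∈ l)
    (d e : Perm (Fin N)) : l.foldr moveCardToTop d = l.foldr moveCardToTop e :=
  inv_injective <| Equiv.ext fun c =>
    (agreeOn_foldr_moveCardToTop l d e c (List.mem_toFinset.2 (hl c))).1

variable (h : 0 < N) [Nonempty (Fin N)]

theorem rtopStep_eq_map_moveCardToTop (d : Perm (Fin N)) :
    rtopStep h d = (PMF.uniformOfFintype (Fin N)).map (moveCardToTop · d) := by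
  have : (moveCardToTop · d) = (d * moveToTop ·) ∘ d.symm := by
    ext1 c; simp [moveCardToTop]
  rw [this, ← PMF.map_comp, PMF.map_uniformOfFintype_equiv, rtopStep, ← PMF.bind_pure_comp]
  rfl

theorem rtopWalk_eq_map_randomWord (d : Perm (Fin N)) (K : ℕ) :
    rtopWalk h d K = (randomWord (Fin N) K).map (·.foldr moveCardToTop d) := by
  induction K with
  | zero => rw [randomWord, PMF.pure_map]; rfl
  | succ K ih =>
    simp only [rtopWalk, randomWord, ih, PMF.bind_map, PMF.map_bind, PMF.map_comp]
    congr 1; ext1 l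
    simp [rtopStep_eq_map_moveCardToTop, Function.comp_def]

theorem tvDist_rtopWalk_le (d e : Perm (Fin N)) (K : ℕ) :
    tvDist (rtopWalk h d K) (rtopWalk h e K) ≤ N * (((N - 1 : ℕ) : ℝ≥0∞) / N) ^ K := by
  have hcover : {l : List (Fin N) | l.foldr moveCardToTop d ≠ l.foldr moveCardToTop e} ⊆
      {l | ∃ c, c ∉ l} :=
    fun l hl => not_forall.1 fun hall => hl (foldr_moveCardToTop_eq_of_forall_mem hall d e)
  rw [rtopWalk_eq_map_randomWord, rtopWalk_eq_map_randomWord]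
  calc _ ≤ _ := tvDist_map_le _ _ _
    _ ≤ _ := (randomWord (Fin N) K).toOuterMeasure.mono hcover
    _ ≤ _ := by simpa using randomWord_toOuterMeasure_exists_notMem_le (α := Fin N) K

theorem uniformPerm_bind_rtopStep : (uniformPerm N).bind (rtopStep h) = uniformPerm N := by
  calc (uniformPerm N).bind (rtopStep h)
      = (PMF.uniformOfFintype (Fin N)).bind fun j => (uniformPerm N).map (· * moveToTop j) := by
        unfold rtopStep
        simp only [← PMF.bind_pure_comp, Function.comp_def]
        exact PMF.bind_comm _ _ _
    _ = uniformPerm N := by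
        simp only [uniformPerm, ← Equiv.coe_mulRight, PMF.map_uniformOfFintype_equiv,
          PMF.bind_const]

theorem uniformPerm_bind_rtopWalk (K : ℕ) :
    (uniformPerm N).bind (rtopWalk h · K) = uniformPerm N := by
  induction K with
  | zero => exact PMF.bind_pure _
  | succ K ih => simp only [rtopWalk]; rw [← PMF.bind_bind, ih, uniformPerm_bind_rtopStep]

end RandomToTop


/-- **Convergence of random-to-top to the uniform shuffle.** There is a constant `C > 0` such
that for all `N ≥ 2`, taking `K = ⌈2N·log N⌉` steps of the random-to-top shuffle brings the deck
within TV distance `C/N` of the uniform distribution on permutations, from any starting deck. -/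
theorem rtopWalk_mixes_to_uniform :
    ∃ C : ℝ, 0 < C ∧
      ∀ N : ℕ, (hN : 2 ≤ N) → ∀ d : Equiv.Perm (Fin N),
        tvDist (rtopWalk (by omega : 0 < N) d ⌈(2 * (N : ℝ)) * Real.log N⌉₊)
            (uniformPerm N)
          ≤ ENNReal.ofReal (C / N) := by
  refine ⟨1, one_pos, fun N hN d => ?_⟩
  have : Nonempty (Fin N) := ⟨⟨0, by omega⟩⟩
  rw [← RandomToTop.uniformPerm_bind_rtopWalk (by omega) ⌈(2 * (N : ℝ)) * Real.log N⌉₊, one_div]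
  exact tvDist_bind_le_of_forall _ _ _ fun e =>
    (RandomToTop.tvDist_rtopWalk_le _ d e _).trans
      (natCast_mul_pow_le_ofReal_inv (by omega) (Nat.le_ceil _))
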